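/- (Second moment bound) For every positive integer d and every ε > 0 there is a constant C = C(d, ε) such that for all positive integers c₁, X₁,…,X_d and all real X with X ≥ ∏_i X_i^i, one has ∫₀¹ |S₁(α)|² dα ≤ C · X^ε · X₁X₂⋯X_d, where S₁(α) = Σ_{x₁∼X₁,…,x_d∼X_d} e(α · c₁ · x₁ x₂² ⋯ x_d^d). -/

import Mathlib

/-!
By orthogonality of `α ↦ e(α m)` on `[0, 1]`, the integral counts the pairs `(x, y)` of the
box with `c₁ x₁ x₂² ⋯ x_d^d = c₁ y₁ y₂² ⋯ y_d^d`. For fixed `x` every coordinate `yᵢ` divides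
`N = x₁ x₂² ⋯ x_d^d ≤ 2^(d(d+1)/2) X`, so there are at most `τ(N)^d ≪ N^ε` such `y`, and the
box has `X₁ ⋯ X_d` points.
-/

open scoped Real

/-- The exponential sum `S(α) = ∑ e(α · c · x₁ x₂² ⋯ x_d^d)`, where the sum ranges over
tuples `(x₁, …, x_d)` with `xᵢ ∈ [Xᵢ, 2Xᵢ)` and `e(t) = exp(2πit)`. -/
noncomputable def expSum (d : ℕ) (c : ℕ) (Xs : Fin d → ℕ) (α : ℝ) : ℂ :=
  ∑ x ∈ Fintype.piFinset (fun i => Finset.Ico (Xs i) (2 * Xs i)),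
    Complex.exp (2 * Real.pi * Complex.I * (α * (c * ∏ i, x i ^ (i.val + 1) : ℕ)))

open Finset

section Parseval

open Complex

lemma integral_exp_two_pi_I_mul_int (m : ℤ) :
    ∫ α in (0 : ℝ)..1, exp (2 * π * I * (α * m)) = if m = 0 then 1 else 0 := by
  split_ifs with hm
  · simp [hm]
  · have hc : 2 * π * I * m ≠ 0 := by simp [Real.pi_ne_zero, I_ne_zero, hm]
    have hrw (α : ℝ) : exp (2 * π * I * (α * m)) = exp (2 * π * I * m * α) := by ring_nf
    simp_rw [hrw, integral_exp_mul_complex hc, ofReal_one, ofReal_zero, mul_one, mul_zero,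
      exp_zero, mul_comm _ (m : ℂ), exp_int_mul_two_pi_mul_I, sub_self, zero_div]

lemma integral_norm_sum_exp_sq {β : Type*} (A : Finset β) (f : β → ℤ) :
    ∫ α in (0 : ℝ)..1, ‖∑ x ∈ A, exp (2 * π * I * (α * f x))‖ ^ 2 =
      ∑ x ∈ A, (#{y ∈ A | f y = f x} : ℝ) := by
  have hcont (m : ℤ) : Continuous fun α : ℝ => exp (2 * π * I * (α * m)) := by fun_prop
  apply ofReal_injective
  rw [← intervalIntegral.integral_ofReal]
  have hexpand (α : ℝ) : ((‖∑ x ∈ A, exp (2 * π * I * (α * f x))‖ ^ 2 : ℝ) : ℂ) =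
      ∑ x ∈ A, ∑ y ∈ A, exp (2 * π * I * (α * ((f x - f y : ℤ) : ℂ))) := by
    rw [ofReal_pow, ← mul_conj', map_sum, sum_mul_sum]
    refine sum_congr rfl fun x _ => sum_congr rfl fun y _ => ?_
    rw [← exp_conj, ← exp_add]
    simp only [map_mul, conj_ofReal, conj_I, map_ofNat, map_intCast, Int.cast_sub]
    ring_nf
  simp_rw [hexpand]
  rw [intervalIntegral.integral_finsetSum fun x _ =>
    (continuous_finsetSum _ fun y _ => hcont _).intervalIntegrable 0 1, ofReal_sum]
  refine sum_congr rfl fun x _ => ?_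
  rw [intervalIntegral.integral_finsetSum fun y _ => (hcont _).intervalIntegrable 0 1]
  simp_rw [integral_exp_two_pi_I_mul_int, sub_eq_zero, eq_comm (a := f x)]
  rw [sum_boole, ofReal_natCast]

end Parseval

section DivisorBound

open Real

lemma succ_le_pow_of_two_le {b : ℝ} (hb : 2 ≤ b) (a : ℕ) : (a + 1 : ℝ) ≤ b ^ a :=
  calc (a + 1 : ℝ) ≤ 2 ^ a := by exact_mod_cast Nat.lt_two_pow_self
    _ ≤ b ^ a := pow_le_pow_left₀ (by norm_num) hb a

/-- `2 ^ (a δ) ≥ 1 + a δ log 2`, so the constant only has to beat `1 / (δ log 2)`. -/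
lemma succ_le_mul_two_rpow {δ : ℝ} (hδ : 0 < δ) (a : ℕ) :
    (a + 1 : ℝ) ≤ max 1 (δ * log 2)⁻¹ * 2 ^ (a * δ) := by
  set C := max 1 (δ * log 2)⁻¹
  have hlog : 0 < δ * log 2 := mul_pos hδ (log_pos one_lt_two)
  have hC : 1 ≤ C * (δ * log 2) := (inv_le_iff_one_le_mul₀ hlog).1 (le_max_right _ _)
  have hexp : 1 + a * (δ * log 2) ≤ 2 ^ (a * δ) := by
    rw [rpow_def_of_pos two_pos]
    linarith [add_one_le_exp (log 2 * (a * δ))]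
  calc (a + 1 : ℝ) ≤ C * (1 + a * (δ * log 2)) := by
        nlinarith [le_max_left 1 (δ * log 2)⁻¹, (Nat.cast_nonneg a : (0 : ℝ) ≤ a)]
    _ ≤ C * 2 ^ (a * δ) := by gcongr

/-- Only the primes `p < 2 ^ δ⁻¹` cost a constant: for larger `p` we have `p ^ δ ≥ 2`. -/
lemma succ_le_mul_rpow_pow {δ : ℝ} (hδ : 0 < δ) {p : ℕ} (hp : 2 ≤ p) (a : ℕ) :
    (a + 1 : ℝ) ≤ (if p < ⌈(2 : ℝ) ^ δ⁻¹⌉₊ then max 1 (δ * log 2)⁻¹ else 1) *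
      ((p ^ a : ℕ) : ℝ) ^ δ := by
  have hp' : (2 : ℝ) ≤ p := by exact_mod_cast hp
  rw [Nat.cast_pow, ← rpow_natCast, ← rpow_mul (by positivity)]
  split_ifs with hsmall
  · calc (a + 1 : ℝ) ≤ max 1 (δ * log 2)⁻¹ * 2 ^ (a * δ) := succ_le_mul_two_rpow hδ a
      _ ≤ _ := by gcongr
  · have hbig : (2 : ℝ) ≤ (p : ℝ) ^ δ := by
      calc (2 : ℝ) = ((2 : ℝ) ^ δ⁻¹) ^ δ := (rpow_inv_rpow zero_le_two hδ.ne').symm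
        _ ≤ (p : ℝ) ^ δ := by
          gcongr
          exact Nat.ceil_le.1 (not_lt.1 hsmall)
    rw [one_mul, mul_comm, rpow_mul (by positivity), rpow_natCast]
    exact succ_le_pow_of_two_le hbig a

lemma exists_card_divisors_le_mul_rpow {δ : ℝ} (hδ : 0 < δ) :
    ∃ C : ℝ, ∀ n : ℕ, n ≠ 0 → (#n.divisors : ℝ) ≤ C * (n : ℝ) ^ δ := by
  set M := ⌈(2 : ℝ) ^ δ⁻¹⌉₊
  set C₀ := max 1 (δ * log 2)⁻¹
  refine ⟨C₀ ^ M, fun n hn => ?_⟩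
  have hsmall : ∏ p ∈ n.primeFactors, (if p < M then C₀ else 1) ≤ C₀ ^ M := by
    rw [← prod_filter, prod_const]
    exact pow_le_pow_right₀ (le_max_left _ _)
      ((card_le_card fun p hp => mem_range.2 (mem_filter.1 hp).2).trans_eq (card_range M))
  have hprod :
      ∏ p ∈ n.primeFactors, ((p ^ n.factorization p : ℕ) : ℝ) ^ δ = (n : ℝ) ^ δ := by
    rw [finsetProd_rpow _ _ fun _ _ => by positivity, ← Nat.cast_prod,
      ← Nat.support_factorization, ← Finsupp.prod, Nat.prod_factorization_pow_eq_self hn]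
  calc (#n.divisors : ℝ) = ∏ p ∈ n.primeFactors, ((n.factorization p : ℝ) + 1) := by
        rw [Nat.card_divisors hn]; push_cast; rfl
    _ ≤ ∏ p ∈ n.primeFactors,
          (if p < M then C₀ else 1) * ((p ^ n.factorization p : ℕ) : ℝ) ^ δ :=
        prod_le_prod (fun _ _ => by positivity) fun p hp =>
          succ_le_mul_rpow_pow hδ (Nat.prime_of_mem_primeFactors hp).two_le _
    _ ≤ C₀ ^ M * (n : ℝ) ^ δ := by
        rw [prod_mul_distrib, hprod]; gcongr

lemma exists_card_divisors_pow_le_mul_rpow (k : ℕ) {ε : ℝ} (hε : 0 < ε) :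
    ∃ C : ℝ, ∀ n : ℕ, n ≠ 0 → (#n.divisors : ℝ) ^ k ≤ C * (n : ℝ) ^ ε := by
  obtain ⟨C, hC⟩ := exists_card_divisors_le_mul_rpow (δ := ε / (k + 1)) (by positivity)
  refine ⟨C ^ k, fun n hn => ?_⟩
  have hn1 : (1 : ℝ) ≤ n := by exact_mod_cast Nat.one_le_iff_ne_zero.2 hn
  have hC0 : 0 ≤ C := zero_le_one.trans (by simpa using hC 1 one_ne_zero)
  calc (#n.divisors : ℝ) ^ k ≤ (C * (n : ℝ) ^ (ε / (k + 1))) ^ k := by gcongr; exact hC n hn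
    _ = C ^ k * (n : ℝ) ^ (k * (ε / (k + 1))) := by
        rw [mul_pow, ← rpow_mul_natCast (by positivity), mul_comm (ε / _)]
    _ ≤ C ^ k * (n : ℝ) ^ ε := by
        gcongr
        rw [mul_div_assoc', div_le_iff₀ (by positivity)]; nlinarith

end DivisorBound

lemma card_filter_prod_pow_eq_le {ι : Type*} [Fintype ι] [DecidableEq ι] {e : ι → ℕ}
    (he : ∀ i, e i ≠ 0) (A : Finset (ι → ℕ)) {N : ℕ} (hN : N ≠ 0) :
    #{y ∈ A | ∏ i, y i ^ e i = N} ≤ #N.divisors ^ Fintype.card ι := by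
  calc #{y ∈ A | ∏ i, y i ^ e i = N} ≤ #(Fintype.piFinset fun _ : ι => N.divisors) :=
        card_le_card fun y hy => ?_
    _ = #N.divisors ^ Fintype.card ι := by simp
  refine Fintype.mem_piFinset.2 fun i => Nat.mem_divisors.2 ⟨?_, hN⟩
  rw [← (mem_filter.1 hy).2]
  exact (dvd_pow_self _ (he i)).trans (dvd_prod_of_mem _ (mem_univ i))

section Box

variable {ι : Type*} [Fintype ι] [DecidableEq ι]

lemma card_piFinset_Ico_two_mul (X : ι → ℕ) :
    #(Fintype.piFinset fun i => Ico (X i) (2 * X i)) = ∏ i, X i := by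
  simp [two_mul]

variable {X x : ι → ℕ}

lemma prod_pow_ne_zero_of_mem_piFinset_Ico
    (hx : x ∈ Fintype.piFinset fun i => Ico (X i) (2 * X i)) (hX : ∀ i, 0 < X i) (e : ι → ℕ) :
    ∏ i, x i ^ e i ≠ 0 :=
  prod_ne_zero_iff.2 fun i _ => pow_ne_zero _
    ((hX i).trans_le (mem_Ico.1 (Fintype.mem_piFinset.1 hx i)).1).ne'

lemma prod_pow_le_of_mem_piFinset_Ico
    (hx : x ∈ Fintype.piFinset fun i => Ico (X i) (2 * X i)) (e : ι → ℕ) :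
    ∏ i, x i ^ e i ≤ 2 ^ (∑ i, e i) * ∏ i, X i ^ e i :=
  calc ∏ i, x i ^ e i ≤ ∏ i, (2 * X i) ^ e i :=
        prod_le_prod' fun i _ =>
          Nat.pow_le_pow_left (mem_Ico.1 (Fintype.mem_piFinset.1 hx i)).2.le _
    _ = 2 ^ (∑ i, e i) * ∏ i, X i ^ e i := by
        rw [← prod_pow_eq_pow_sum, ← prod_mul_distrib]; simp_rw [mul_pow]

end Box

lemma integral_norm_expSum_sq {d c : ℕ} (hc : 0 < c) (Xs : Fin d → ℕ) :
    ∫ α in (0 : ℝ)..1, ‖expSum d c Xs α‖ ^ 2 =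
      ∑ x ∈ Fintype.piFinset (fun i => Ico (Xs i) (2 * Xs i)),
        (#{y ∈ Fintype.piFinset (fun i => Ico (Xs i) (2 * Xs i)) |
          ∏ i, y i ^ (i.val + 1) = ∏ i, x i ^ (i.val + 1)} : ℝ) := by
  have hsum : expSum d c Xs = fun α : ℝ =>
      ∑ x ∈ Fintype.piFinset (fun i => Ico (Xs i) (2 * Xs i)),
        Complex.exp (2 * π * Complex.I * (α * ((c * ∏ i, x i ^ (i.val + 1) : ℕ) : ℤ))) := by
    funext α
    simp only [expSum, Int.cast_natCast]
  simp_rw [hsum, integral_norm_sum_exp_sq, Nat.cast_inj, mul_right_inj' hc.ne']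

theorem second_moment_bound_general (d : ℕ) (ε : ℝ) (hε : 0 < ε) :
    ∃ C : ℝ, ∀ (c₁ : ℕ) (Xs : Fin d → ℕ) (X : ℝ),
      0 < c₁ → (∀ i, 0 < Xs i) → ((∏ i, Xs i ^ (i.val + 1) : ℕ) : ℝ) ≤ X →
      (∫ α in (0:ℝ)..1, ‖expSum d c₁ Xs α‖ ^ 2) ≤
        C * X ^ ε * ((∏ i, Xs i : ℕ) : ℝ) := by
  obtain ⟨C, hC⟩ := exists_card_divisors_pow_le_mul_rpow d hε
  have hC0 : 0 ≤ C := zero_le_one.trans (by simpa using hC 1 one_ne_zero)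
  set s := ∑ i : Fin d, (i.val + 1)
  refine ⟨C * ((2 : ℝ) ^ s) ^ ε, fun c₁ Xs X hc₁ hXs hX => ?_⟩
  have hX0 : 0 ≤ X := (Nat.cast_nonneg _).trans hX
  set box := Fintype.piFinset fun i => Ico (Xs i) (2 * Xs i)
  have hfibre (x : Fin d → ℕ) (hx : x ∈ box) :
      (#{y ∈ box | ∏ i, y i ^ (i.val + 1) = ∏ i, x i ^ (i.val + 1)} : ℝ) ≤
        C * ((2 : ℝ) ^ s * X) ^ ε := by
    have hN := prod_pow_ne_zero_of_mem_piFinset_Ico hx hXs fun i => i.val + 1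
    have hNX : ((∏ i, x i ^ (i.val + 1) : ℕ) : ℝ) ≤ 2 ^ s * X := by
      refine (Nat.cast_le.2 (prod_pow_le_of_mem_piFinset_Ico hx _)).trans ?_
      rw [Nat.cast_mul, Nat.cast_pow, Nat.cast_ofNat]
      gcongr
    calc _ ≤ (#(∏ i, x i ^ (i.val + 1)).divisors : ℝ) ^ d := by
          exact_mod_cast (card_filter_prod_pow_eq_le (fun i : Fin d => i.val.succ_ne_zero) box
            hN).trans_eq (by rw [Fintype.card_fin])
      _ ≤ C * ((∏ i, x i ^ (i.val + 1) : ℕ) : ℝ) ^ ε := hC _ hN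
      _ ≤ C * ((2 : ℝ) ^ s * X) ^ ε := by gcongr
  rw [integral_norm_expSum_sq hc₁]
  calc _ ≤ ∑ _x ∈ box, C * ((2 : ℝ) ^ s * X) ^ ε := sum_le_sum hfibre
    _ = C * ((2 : ℝ) ^ s) ^ ε * X ^ ε * ((∏ i, Xs i : ℕ) : ℝ) := by
        rw [sum_const, nsmul_eq_mul, card_piFinset_Ico_two_mul, Real.mul_rpow (by positivity) hX0]
        ring

theorem second_moment_bound (d : ℕ) (hd : 0 < d) (ε : ℝ) (hε : 0 < ε) :
    ∃ C : ℝ, ∀ (c₁ : ℕ) (Xs : Fin d → ℕ) (X : ℝ),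
      0 < c₁ → (∀ i, 0 < Xs i) → ((∏ i, Xs i ^ (i.val + 1) : ℕ) : ℝ) ≤ X →
      (∫ α in (0:ℝ)..1, ‖expSum d c₁ Xs α‖ ^ 2) ≤
        C * X ^ ε * ((∏ i, Xs i : ℕ) : ℝ) :=
  second_moment_bound_general d ε hε
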